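/- For every n ≥ 5 there is no non-degenerate naturally graded Leibniz superalgebra L = L₀ ⊕ L₁ over ℂ with super-nilindex (n,3) (i.e. with dim L₀ = n and dim L₁ = 3). -/
import Mathlib


/-- The sign `(-1)^(j·k)` for parities `j k : ZMod 2`, as a complex scalar. -/
def ssign (i j : ZMod 2) : ℂ := if i = 1 ∧ j = 1 then -1 else 1

/-- A (complex) Leibniz superalgebra structure on the vector space `V`: a ℤ₂-grading
`g` whose parts are complementary, together with an even bilinear product satisfying
the super Leibniz identity
`[x,[y,z]] = [[x,y],z] − (−1)^{|y||z|}[[x,z],y]` for homogeneous `y, z`. -/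
structure LeibnizSuperAlg (V : Type*) [AddCommGroup V] [Module ℂ V] where
  g : ZMod 2 → Submodule ℂ V
  bk : V →ₗ[ℂ] V →ₗ[ℂ] V
  compl : IsCompl (g 0) (g 1)
  grading : ∀ i j : ZMod 2, ∀ x ∈ g i, ∀ y ∈ g j, bk x y ∈ g (i + j)
  leibniz : ∀ j k : ZMod 2, ∀ x : V, ∀ y ∈ g j, ∀ z ∈ g k,
    bk x (bk y z) = bk (bk x y) z - ssign j k • bk (bk x z) y

namespace LeibnizSuperAlg

variable {V : Type*} [AddCommGroup V] [Module ℂ V]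

/-- The descending sequences `C⁰(L_i) = L_i`, `C^{k+1}(L_i) = [C^k(L_i), L₀]`. -/
def C (A : LeibnizSuperAlg V) (i : ZMod 2) : ℕ → Submodule ℂ V
  | 0 => A.g i
  | k + 1 => Submodule.span ℂ {z | ∃ x ∈ C A i k, ∃ y ∈ A.g 0, z = A.bk x y}

/-- The descending central sequence of the whole superalgebra. -/
def DC (A : LeibnizSuperAlg V) : ℕ → Submodule ℂ V
  | 0 => ⊤
  | k + 1 => Submodule.span ℂ {z | ∃ x ∈ DC A k, ∃ y : V, z = A.bk x y}

/-- Nilpotency: the descending central sequence reaches zero. -/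
def IsNilpotent (A : LeibnizSuperAlg V) : Prop := ∃ k, A.DC k = ⊥

/-- `A` is nilpotent with `dim L₀ = n`, `dim L₁ = m` and super-nilindex `(n, m)`
(the maximal possible value). -/
def HasMaxSNilindex (A : LeibnizSuperAlg V) (n m : ℕ) : Prop :=
  A.IsNilpotent ∧ Module.finrank ℂ (A.g 0) = n ∧ Module.finrank ℂ (A.g 1) = m ∧
    A.C 0 (n - 1) ≠ ⊥ ∧ A.C 1 (m - 1) ≠ ⊥ ∧ A.C 0 n = ⊥ ∧ A.C 1 m = ⊥

/-- Non-degeneracy: the product does not vanish identically on `L₁ × L₁`. -/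
def NonDegenerate (A : LeibnizSuperAlg V) : Prop :=
  ∃ x ∈ A.g 1, ∃ y ∈ A.g 1, A.bk x y ≠ 0

/-- `A` is naturally graded: there are subspaces `W a i` (`i ≥ 1`, parity `a`), splitting
the filtrations `C` (so that `W a i ≅ C^{i-1}(L_a)/C^i(L_a)` and `L ≅ gr(L)` in the
natural way) and compatible with the product (so `gr(L)` is a graded Leibniz
superalgebra, `[Lⁱ, Lʲ] ⊆ L^{i+j}`).  For finite-dimensional nilpotent superalgebras
this is equivalent to the textbook definition `L ≅ gr(L)` with `gr(L)` graded. -/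
def NaturallyGraded (A : LeibnizSuperAlg V) : Prop :=
  ∃ W : ZMod 2 → ℕ → Submodule ℂ V,
    (∀ a, W a 0 = ⊥) ∧
    (∀ a k, A.C a k = W a (k + 1) ⊔ A.C a (k + 1)) ∧
    (∀ a k, W a (k + 1) ⊓ A.C a (k + 1) = ⊥) ∧
    (∀ a b : ZMod 2, ∀ i j : ℕ, ∀ x ∈ W a i, ∀ y ∈ W b j, A.bk x y ∈ W (a + b) (i + j))

/-- `X 1, …, X n` and `Y 1, …, Y m` form an adapted basis of the superalgebra:
the `X i` are even, the `Y j` are odd, and together they form a basis of `V`. -/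
def IsAdaptedBasis (A : LeibnizSuperAlg V) (n m : ℕ) (X Y : ℕ → V) : Prop :=
  (∀ i, 1 ≤ i → i ≤ n → X i ∈ A.g 0) ∧ (∀ j, 1 ≤ j → j ≤ m → Y j ∈ A.g 1) ∧
  LinearIndependent ℂ
    (Sum.elim (fun i : Fin n => X (i.val + 1)) (fun j : Fin m => Y (j.val + 1))) ∧
  Submodule.span ℂ
    (Set.range (Sum.elim (fun i : Fin n => X (i.val + 1)) (fun j : Fin m => Y (j.val + 1)))) = ⊤

end LeibnizSuperAlg

namespace LeibnizSuperAlg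

open Module

section Aux
variable {V : Type*} [AddCommGroup V] [Module ℂ V]

lemma C_zero' (A : LeibnizSuperAlg V) (a : ZMod 2) : A.C a 0 = A.g a := rfl

lemma bk_mem_C (A : LeibnizSuperAlg V) (a : ZMod 2) (k : ℕ) {x y : V}
    (hx : x ∈ A.C a k) (hy : y ∈ A.g 0) : A.bk x y ∈ A.C a (k + 1) :=
  Submodule.subset_span ⟨x, hx, y, hy, rfl⟩

lemma C_succ_le (A : LeibnizSuperAlg V) (a : ZMod 2) : ∀ k, A.C a (k + 1) ≤ A.C a k := by
  intro k
  induction k with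
  | zero =>
    rw [show A.C a 1 = Submodule.span ℂ {z | ∃ x ∈ A.C a 0, ∃ y ∈ A.g 0, z = A.bk x y} from rfl]
    rw [Submodule.span_le]
    rintro z ⟨x, hx, y, hy, rfl⟩
    have := A.grading a 0 x hx y hy
    rwa [add_zero] at this
  | succ k ih =>
    rw [show A.C a (k+2) = Submodule.span ℂ {z | ∃ x ∈ A.C a (k+1), ∃ y ∈ A.g 0, z = A.bk x y}
      from rfl, Submodule.span_le]
    rintro z ⟨x, hx, y, hy, rfl⟩
    exact A.bk_mem_C a k (ih hx) hy

lemma C_le_g (A : LeibnizSuperAlg V) (a : ZMod 2) : ∀ k, A.C a k ≤ A.g a := by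
  intro k
  induction k with
  | zero => exact le_rfl
  | succ k ih => exact le_trans (A.C_succ_le a k) ih

lemma C_stab (A : LeibnizSuperAlg V) (a : ZMod 2) (k : ℕ) (h : A.C a k = A.C a (k + 1)) :
    ∀ j, A.C a (k + j) = A.C a k := by
  intro j
  induction j with
  | zero => rfl
  | succ j ih =>
    have h2 : A.C a (k + j + 1) =
        Submodule.span ℂ {z | ∃ x ∈ A.C a (k + j), ∃ y ∈ A.g 0, z = A.bk x y} := rfl
    rw [show k + (j+1) = (k + j) + 1 from rfl, h2, ih]
    exact h.symm

lemma smul_cancel' {x : V} (hx : x ≠ 0) {c d : ℂ} (h : c • x = d • x) : c = d := by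
  have h2 : (c - d) • x = 0 := by rw [sub_smul, h, sub_self]
  rcases smul_eq_zero.mp h2 with h3 | h3
  · exact sub_eq_zero.mp h3
  · exact absurd h3 hx

lemma ss00 : ssign 0 0 = 1 := by norm_num [ssign]
lemma ss10 : ssign 1 0 = 1 := by norm_num [ssign]
lemma ss01 : ssign 0 1 = 1 := by norm_num [ssign]
lemma ss11 : ssign 1 1 = -1 := by norm_num [ssign]

/-- Bracketing an element of `C a k` with an element of `C 0 1` lands in `C a (k+2)`. -/
lemma bk_C_C01 (A : LeibnizSuperAlg V) (a : ZMod 2) (k : ℕ) {v w : V}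
    (hv : v ∈ A.C a k) (hw : w ∈ A.C 0 1) : A.bk v w ∈ A.C a (k + 2) := by
  have hgen : ∀ w ∈ {z | ∃ x ∈ A.C 0 0, ∃ y ∈ A.g 0, z = A.bk x y},
      A.bk v w ∈ A.C a (k + 2) := by
    rintro w ⟨p, hp, q, hq, rfl⟩
    have hp' : p ∈ A.g 0 := hp
    have L := A.leibniz 0 0 v p hp' q hq
    rw [ss00, one_smul] at L
    rw [L]
    exact sub_mem (A.bk_mem_C a (k+1) (A.bk_mem_C a k hv hp') hq)
      (A.bk_mem_C a (k+1) (A.bk_mem_C a k hv hq) hp')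
  have hC : A.C 0 1 = Submodule.span ℂ {z | ∃ x ∈ A.C 0 0, ∃ y ∈ A.g 0, z = A.bk x y} := rfl
  rw [hC] at hw
  induction hw using Submodule.span_induction with
  | mem z hz => exact hgen z hz
  | zero => rw [map_zero]; exact zero_mem _
  | add y z _ _ hy hz => rw [map_add]; exact add_mem hy hz
  | smul c y _ hy => rw [map_smul]; exact Submodule.smul_mem _ c hy

lemma gen_le (A : LeibnizSuperAlg V) (W : ZMod 2 → ℕ → Submodule ℂ V)
    (hWC : ∀ a k, A.C a k = W a (k + 1) ⊔ A.C a (k + 1))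
    (a : ZMod 2) (k : ℕ) {v x1 : V}
    (hv : v ∈ W a (k + 1)) (hvs : ∀ u ∈ W a (k + 1), ∃ c : ℂ, u = c • v)
    (hx1 : x1 ∈ W 0 1) (hx1s : ∀ u ∈ W 0 1, ∃ c : ℂ, u = c • x1) :
    A.C a (k + 1) ≤ (Submodule.span ℂ {A.bk v x1}) ⊔ A.C a (k + 2) := by
  have hvC : v ∈ A.C a k := by rw [hWC a k]; exact Submodule.mem_sup_left hv
  have hC : A.C a (k+1) = Submodule.span ℂ {z | ∃ x ∈ A.C a k, ∃ y ∈ A.g 0, z = A.bk x y} := rfl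
  rw [hC, Submodule.span_le]
  rintro z ⟨x, hx, y, hy, rfl⟩
  have hy0 : y ∈ A.g 0 := hy
  rw [hWC a k] at hx
  obtain ⟨s, hs, t, ht, hst⟩ := Submodule.mem_sup.mp hx
  have hy' : y ∈ A.C 0 0 := hy0
  rw [hWC 0 0] at hy'
  obtain ⟨u, hu, w, hw, huw⟩ := Submodule.mem_sup.mp hy'
  obtain ⟨c, hc⟩ := hvs s hs
  obtain ⟨d, hd⟩ := hx1s u hu
  have key : A.bk x y = (c * d) • A.bk v x1 + (c • A.bk v w + A.bk t y) := by
    rw [← hst, ← huw, hc, hd]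
    simp only [map_add, map_smul, LinearMap.add_apply, LinearMap.smul_apply, smul_add,
      smul_smul]
    module
  rw [key]
  refine add_mem (Submodule.mem_sup_left ?_) (Submodule.mem_sup_right (add_mem ?_ ?_))
  · exact Submodule.smul_mem _ _ (Submodule.mem_span_singleton_self _)
  · exact Submodule.smul_mem _ _ (A.bk_C_C01 a k hvC hw)
  · exact A.bk_mem_C a (k + 1) ht hy0

end Aux

section AuxFD
variable {V : Type*} [AddCommGroup V] [Module ℂ V] [FiniteDimensional ℂ V]

lemma finrank_pos_of_ne_bot' {S : Submodule ℂ V} (h : S ≠ ⊥) : 1 ≤ finrank ℂ S := by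
  by_contra hc
  push_neg at hc
  interval_cases hfr : finrank ℂ S
  exact h (Submodule.finrank_eq_zero.mp hfr)

lemma span_of_dim_one (S : Submodule ℂ V) (hS : finrank ℂ S = 1) {v : V}
    (hv : v ∈ S) (hv0 : v ≠ 0) : ∀ u ∈ S, ∃ c : ℂ, u = c • v := by
  intro u hu
  have hvS : (⟨v, hv⟩ : S) ≠ 0 := by simpa [Subtype.ext_iff] using hv0
  have htop := (finrank_eq_one_iff_of_nonzero (⟨v, hv⟩ : S) hvS).mp hS
  have hmem : (⟨u, hu⟩ : S) ∈ Submodule.span ℂ {(⟨v, hv⟩ : S)} := by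
    rw [htop]; trivial
  obtain ⟨c, hc⟩ := Submodule.mem_span_singleton.mp hmem
  refine ⟨c, ?_⟩
  have h2 := congrArg (Subtype.val) hc
  simpa using h2.symm

lemma rank_chain (A : LeibnizSuperAlg V) (W : ZMod 2 → ℕ → Submodule ℂ V)
    (hWC : ∀ a k, A.C a k = W a (k + 1) ⊔ A.C a (k + 1))
    (hWI : ∀ a k, W a (k + 1) ⊓ A.C a (k + 1) = ⊥)
    (a : ZMod 2) (N : ℕ) (hg : finrank ℂ (A.g a) = N)
    (hne : A.C a (N - 1) ≠ ⊥) (hbot : A.C a N = ⊥) :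
    ∀ k < N, finrank ℂ (W a (k + 1)) = 1 := by
  have hF : ∀ k, finrank ℂ (A.C a k) = finrank ℂ (W a (k + 1)) + finrank ℂ (A.C a (k + 1)) := by
    intro k
    have h1 := Submodule.finrank_sup_add_finrank_inf_eq (W a (k + 1)) (A.C a (k + 1))
    rw [hWI, finrank_bot, add_zero] at h1
    rw [hWC a k, h1]
  have hstrict : ∀ k < N, A.C a k ≠ A.C a (k + 1) := by
    intro k hk heq
    have hs := A.C_stab a k heq
    have h1 : A.C a (N - 1) = A.C a k := by
      have he : k + (N - 1 - k) = N - 1 := by omega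
      rw [← he]; exact hs _
    have h2 : A.C a N = A.C a k := by
      have he : k + (N - k) = N := by omega
      rw [← he]; exact hs _
    exact hne (h1.trans (h2.symm.trans hbot))
  have hWne : ∀ k < N, 1 ≤ finrank ℂ (W a (k + 1)) := by
    intro k hk
    apply finrank_pos_of_ne_bot'
    intro hb
    exact hstrict k hk (by rw [hWC a k, hb, bot_sup_eq])
  have hlow : ∀ j ≤ N, j ≤ finrank ℂ (A.C a (N - j)) := by
    intro j
    induction j with
    | zero => omega
    | succ j ih =>
      intro hj
      have h1 := hF (N - (j + 1))
      have h2 : N - (j + 1) + 1 = N - j := by omega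
      have h3 := hWne (N - (j + 1)) (by omega)
      rw [h2] at h1 h3
      have h4 := ih (by omega)
      omega
  have hup : ∀ k ≤ N, finrank ℂ (A.C a k) = N - k := by
    intro k
    induction k with
    | zero => intro _; rw [A.C_zero']; exact hg.trans (by omega)
    | succ k ih =>
      intro hk
      have h1 := hF k
      have h2 := ih (by omega)
      have h3 := hWne k (by omega)
      have h4 : N - (k + 1) ≤ finrank ℂ (A.C a (k + 1)) := by
        have h5 := hlow (N - (k + 1)) (by omega)
        have he : N - (N - (k + 1)) = k + 1 := by omega
        rwa [he] at h5
      omega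
  intro k hk
  have h1 := hF k
  have h2 := hup k (by omega)
  have h3 := hup (k + 1) (by omega)
  omega

lemma step (A : LeibnizSuperAlg V) (W : ZMod 2 → ℕ → Submodule ℂ V)
    (hWC : ∀ a k, A.C a k = W a (k + 1) ⊔ A.C a (k + 1))
    (hWI : ∀ a k, W a (k + 1) ⊓ A.C a (k + 1) = ⊥)
    (hWg : ∀ a b : ZMod 2, ∀ i j : ℕ, ∀ x ∈ W a i, ∀ y ∈ W b j,
      A.bk x y ∈ W (a + b) (i + j))
    (a : ZMod 2) (k : ℕ) {v x1 : V}
    (hv : v ∈ W a (k + 1)) (hvs : ∀ u ∈ W a (k + 1), ∃ c : ℂ, u = c • v)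
    (hx1 : x1 ∈ W 0 1) (hx1s : ∀ u ∈ W 0 1, ∃ c : ℂ, u = c • x1)
    (hdim : finrank ℂ (W a (k + 2)) = 1) :
    A.bk v x1 ∈ W a (k + 2) ∧ A.bk v x1 ≠ 0 ∧
      (∀ u ∈ W a (k + 2), ∃ c : ℂ, u = c • A.bk v x1) := by
  have hmem : A.bk v x1 ∈ W a (k + 2) := by
    have h2 := hWg a 0 (k + 1) 1 v hv x1 hx1
    rwa [add_zero] at h2
  have hne : A.bk v x1 ≠ 0 := by
    intro h0
    have hle := A.gen_le W hWC a k hv hvs hx1 hx1s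
    rw [h0] at hle
    simp only [Submodule.span_zero_singleton, bot_sup_eq] at hle
    have hWle : W a (k + 2) ≤ A.C a (k + 1) := by
      rw [hWC a (k + 1)]; exact le_sup_left
    have h3 : W a (k + 2) ≤ W a (k + 2) ⊓ A.C a (k + 2) := le_inf le_rfl (hWle.trans hle)
    rw [hWI a (k + 1)] at h3
    have hbot : W a (k + 2) = ⊥ := le_bot_iff.mp h3
    rw [hbot] at hdim
    simp [finrank_bot] at hdim
  exact ⟨hmem, hne, span_of_dim_one _ hdim hmem hne⟩

end AuxFD
end LeibnizSuperAlg


/-- For every `n ≥ 5` there is no non-degenerate naturally graded Leibniz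
superalgebra of super-nilindex `(n, 3)`. -/
theorem stmt16 {V : Type*} [AddCommGroup V] [Module ℂ V] [FiniteDimensional ℂ V] (A : LeibnizSuperAlg V) (n : ℕ) (hn : 5 ≤ n)
    (h : A.HasMaxSNilindex n 3) (hnd : A.NonDegenerate) (hng : A.NaturallyGraded) :
    False := by
  classical
  open LeibnizSuperAlg Module in
  obtain ⟨Wm, hW0, hWC, hWI, hWg⟩ := hng
  obtain ⟨hnil, hg0, hg1, hC0ne, hC1ne, hC0bot, hC1bot⟩ := h
  have p11 : (1 + 1 : ZMod 2) = 0 := by decide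
  have p01 : (0 + 1 : ZMod 2) = 1 := by decide
  have hWr0 : ∀ k < n, finrank ℂ (Wm 0 (k + 1)) = 1 :=
    A.rank_chain Wm hWC hWI 0 n hg0 hC0ne hC0bot
  have hWr1 : ∀ k < 3, finrank ℂ (Wm 1 (k + 1)) = 1 :=
    A.rank_chain Wm hWC hWI 1 3 hg1 hC1ne hC1bot
  -- the even generator x1
  have hW01ne : Wm 0 1 ≠ ⊥ := by
    intro hb
    have h1 := hWr0 0 (by omega)
    rw [hb] at h1
    simp [finrank_bot] at h1
  obtain ⟨x1, hx1W, hx1ne⟩ := Submodule.exists_mem_ne_zero_of_ne_bot hW01ne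
  have hx1s := span_of_dim_one _ (hWr0 0 (by omega)) hx1W hx1ne
  -- even chain x2 x3 x4 x5
  obtain ⟨hx2W, hx2ne, hx2s⟩ :=
    A.step Wm hWC hWI hWg 0 0 hx1W hx1s hx1W hx1s (hWr0 1 (by omega))
  set x2 := A.bk x1 x1 with hx2def
  obtain ⟨hx3W, hx3ne, hx3s⟩ :=
    A.step Wm hWC hWI hWg 0 1 hx2W hx2s hx1W hx1s (hWr0 2 (by omega))
  set x3 := A.bk x2 x1 with hx3def
  obtain ⟨hx4W, hx4ne, hx4s⟩ :=
    A.step Wm hWC hWI hWg 0 2 hx3W hx3s hx1W hx1s (hWr0 3 (by omega))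
  set x4 := A.bk x3 x1 with hx4def
  obtain ⟨hx5W, hx5ne, hx5s⟩ :=
    A.step Wm hWC hWI hWg 0 3 hx4W hx4s hx1W hx1s (hWr0 4 (by omega))
  set x5 := A.bk x4 x1 with hx5def
  -- the odd generator y1 and chain y2 y3
  have hW11ne : Wm 1 1 ≠ ⊥ := by
    intro hb
    have h1 := hWr1 0 (by omega)
    rw [hb] at h1
    simp [finrank_bot] at h1
  obtain ⟨y1, hy1W, hy1ne⟩ := Submodule.exists_mem_ne_zero_of_ne_bot hW11ne
  have hy1s := span_of_dim_one _ (hWr1 0 (by omega)) hy1W hy1ne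
  obtain ⟨hy2W, hy2ne, hy2s⟩ :=
    A.step Wm hWC hWI hWg 1 0 hy1W hy1s hx1W hx1s (hWr1 1 (by omega))
  set y2 := A.bk y1 x1 with hy2def
  obtain ⟨hy3W, hy3ne, hy3s⟩ :=
    A.step Wm hWC hWI hWg 1 1 hy2W hy2s hx1W hx1s (hWr1 2 (by omega))
  set y3 := A.bk y2 x1 with hy3def
  -- y3 bracket x1 vanishes
  have hy3x1 : A.bk y3 x1 = 0 := by
    have hm : A.bk y3 x1 ∈ Wm 1 4 := by
      have h2 := hWg 1 0 3 1 y3 hy3W x1 hx1W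
      rwa [add_zero] at h2
    have hle : Wm 1 4 ≤ A.C 1 3 := by rw [hWC 1 3]; exact le_sup_left
    rw [hC1bot] at hle
    exact (Submodule.mem_bot ℂ).mp (hle hm)
  -- memberships in g
  have hWleg : ∀ a : ZMod 2, ∀ k, Wm a (k + 1) ≤ A.g a := fun a k =>
    le_trans (by rw [hWC a k]; exact le_sup_left) (A.C_le_g a k)
  have hx1g : x1 ∈ A.g 0 := hWleg 0 0 hx1W
  have hx2g : x2 ∈ A.g 0 := hWleg 0 1 hx2W
  have hx3g : x3 ∈ A.g 0 := hWleg 0 2 hx3W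
  have hy1g : y1 ∈ A.g 1 := hWleg 1 0 hy1W
  have hy2g : y2 ∈ A.g 1 := hWleg 1 1 hy2W
  have hy3g : y3 ∈ A.g 1 := hWleg 1 2 hy3W
  -- coordinates of the odd-odd and even-odd products
  obtain ⟨a1, P11⟩ : ∃ c : ℂ, A.bk y1 y1 = c • x2 := by
    refine hx2s _ ?_
    have h2 := hWg 1 1 1 1 y1 hy1W y1 hy1W
    rwa [p11] at h2
  obtain ⟨a2, P21⟩ : ∃ c : ℂ, A.bk y2 y1 = c • x3 := by
    refine hx3s _ ?_
    have h2 := hWg 1 1 2 1 y2 hy2W y1 hy1W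
    rwa [p11] at h2
  obtain ⟨a3, P31⟩ : ∃ c : ℂ, A.bk y3 y1 = c • x4 := by
    refine hx4s _ ?_
    have h2 := hWg 1 1 3 1 y3 hy3W y1 hy1W
    rwa [p11] at h2
  obtain ⟨al, Pal⟩ : ∃ c : ℂ, A.bk x1 y1 = c • y2 := by
    refine hy2s _ ?_
    have h2 := hWg 0 1 1 1 x1 hx1W y1 hy1W
    rwa [p01] at h2
  obtain ⟨be, Pbe⟩ : ∃ c : ℂ, A.bk x1 y2 = c • y3 := by
    refine hy3s _ ?_
    have h2 := hWg 0 1 1 2 x1 hx1W y2 hy2W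
    rwa [p01] at h2
  -- vanishing even products
  have E2 : A.bk x1 x2 = 0 := by
    have L := A.leibniz 0 0 x1 x1 hx1g x1 hx1g
    simp only [ss00, ss01, ss10, ss11, one_smul, neg_smul, neg_neg, neg_zero, map_sub, map_add, map_smul, map_zero, LinearMap.smul_apply, LinearMap.sub_apply, LinearMap.add_apply, LinearMap.zero_apply, ← hx2def, ← hx3def, ← hx4def, ← hx5def, ← hy2def, ← hy3def, hy3x1, smul_zero, sub_self, sub_zero, zero_sub] at L
    linear_combination (norm := module) L
  have E22 : A.bk x2 x2 = 0 := by
    have L := A.leibniz 0 0 x2 x1 hx1g x1 hx1g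
    simp only [ss00, ss01, ss10, ss11, one_smul, neg_smul, neg_neg, neg_zero, map_sub, map_add, map_smul, map_zero, LinearMap.smul_apply, LinearMap.sub_apply, LinearMap.add_apply, LinearMap.zero_apply, ← hx2def, ← hx3def, ← hx4def, ← hx5def, ← hy2def, ← hy3def, hy3x1, smul_zero, sub_self, sub_zero, zero_sub] at L
    linear_combination (norm := module) L
  have E3 : A.bk x1 x3 = 0 := by
    have L := A.leibniz 0 0 x1 x2 hx2g x1 hx1g
    simp only [ss00, ss01, ss10, ss11, one_smul, neg_smul, neg_neg, neg_zero, map_sub, map_add, map_smul, map_zero, LinearMap.smul_apply, LinearMap.sub_apply, LinearMap.add_apply, LinearMap.zero_apply, ← hx2def, ← hx3def, ← hx4def, ← hx5def, ← hy2def, ← hy3def, hy3x1, smul_zero, sub_self, sub_zero, zero_sub, E2, E22] at L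
    linear_combination (norm := module) L
  have E32 : A.bk x3 x2 = 0 := by
    have L := A.leibniz 0 0 x3 x1 hx1g x1 hx1g
    simp only [ss00, ss01, ss10, ss11, one_smul, neg_smul, neg_neg, neg_zero, map_sub, map_add, map_smul, map_zero, LinearMap.smul_apply, LinearMap.sub_apply, LinearMap.add_apply, LinearMap.zero_apply, ← hx2def, ← hx3def, ← hx4def, ← hx5def, ← hy2def, ← hy3def, hy3x1, smul_zero, sub_self, sub_zero, zero_sub] at L
    linear_combination (norm := module) L
  have E23 : A.bk x2 x3 = 0 := by
    have L := A.leibniz 0 0 x2 x2 hx2g x1 hx1g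
    simp only [ss00, ss01, ss10, ss11, one_smul, neg_smul, neg_neg, neg_zero, map_sub, map_add, map_smul, map_zero, LinearMap.smul_apply, LinearMap.sub_apply, LinearMap.add_apply, LinearMap.zero_apply, ← hx2def, ← hx3def, ← hx4def, ← hx5def, ← hy2def, ← hy3def, hy3x1, smul_zero, sub_self, sub_zero, zero_sub, E22, E32] at L
    linear_combination (norm := module) L
  have E4 : A.bk x1 x4 = 0 := by
    have L := A.leibniz 0 0 x1 x3 hx3g x1 hx1g
    simp only [ss00, ss01, ss10, ss11, one_smul, neg_smul, neg_neg, neg_zero, map_sub, map_add, map_smul, map_zero, LinearMap.smul_apply, LinearMap.sub_apply, LinearMap.add_apply, LinearMap.zero_apply, ← hx2def, ← hx3def, ← hx4def, ← hx5def, ← hy2def, ← hy3def, hy3x1, smul_zero, sub_self, sub_zero, zero_sub, E3, E23] at L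
    linear_combination (norm := module) L
  -- derived odd-odd products
  have D1 : A.bk y1 y2 = a1 • x3 - a2 • x3 := by
    have L := A.leibniz 1 0 y1 y1 hy1g x1 hx1g
    simp only [ss00, ss01, ss10, ss11, one_smul, neg_smul, neg_neg, neg_zero, map_sub, map_add, map_smul, map_zero, LinearMap.smul_apply, LinearMap.sub_apply, LinearMap.add_apply, LinearMap.zero_apply, ← hx2def, ← hx3def, ← hx4def, ← hx5def, ← hy2def, ← hy3def, hy3x1, smul_zero, sub_self, sub_zero, zero_sub, P11, P21] at L
    linear_combination (norm := module) L
  have D2 : A.bk y2 y2 = a2 • x4 - a3 • x4 := by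
    have L := A.leibniz 1 0 y2 y1 hy1g x1 hx1g
    simp only [ss00, ss01, ss10, ss11, one_smul, neg_smul, neg_neg, neg_zero, map_sub, map_add, map_smul, map_zero, LinearMap.smul_apply, LinearMap.sub_apply, LinearMap.add_apply, LinearMap.zero_apply, ← hx2def, ← hx3def, ← hx4def, ← hx5def, ← hy2def, ← hy3def, hy3x1, smul_zero, sub_self, sub_zero, zero_sub, P21, P31] at L
    linear_combination (norm := module) L
  have D3 : A.bk y3 y2 = a3 • x5 := by
    have L := A.leibniz 1 0 y3 y1 hy1g x1 hx1g
    simp only [ss00, ss01, ss10, ss11, one_smul, neg_smul, neg_neg, neg_zero, map_sub, map_add, map_smul, map_zero, LinearMap.smul_apply, LinearMap.sub_apply, LinearMap.add_apply, LinearMap.zero_apply, ← hx2def, ← hx3def, ← hx4def, ← hx5def, ← hy2def, ← hy3def, hy3x1, smul_zero, sub_self, sub_zero, zero_sub, P31] at L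
    linear_combination (norm := module) L
  have D4 : A.bk y1 y3 = a1 • x4 - a2 • x4 - (a2 • x4 - a3 • x4) := by
    have L := A.leibniz 1 0 y1 y2 hy2g x1 hx1g
    simp only [ss00, ss01, ss10, ss11, one_smul, neg_smul, neg_neg, neg_zero, map_sub, map_add, map_smul, map_zero, LinearMap.smul_apply, LinearMap.sub_apply, LinearMap.add_apply, LinearMap.zero_apply, ← hx2def, ← hx3def, ← hx4def, ← hx5def, ← hy2def, ← hy3def, hy3x1, smul_zero, sub_self, sub_zero, zero_sub, D1, D2] at L
    linear_combination (norm := module) L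
  have D5 : A.bk y2 y3 = a2 • x5 - a3 • x5 - a3 • x5 := by
    have L := A.leibniz 1 0 y2 y2 hy2g x1 hx1g
    simp only [ss00, ss01, ss10, ss11, one_smul, neg_smul, neg_neg, neg_zero, map_sub, map_add, map_smul, map_zero, LinearMap.smul_apply, LinearMap.sub_apply, LinearMap.add_apply, LinearMap.zero_apply, ← hx2def, ← hx3def, ← hx4def, ← hx5def, ← hy2def, ← hy3def, hy3x1, smul_zero, sub_self, sub_zero, zero_sub, D2, D3] at L
    linear_combination (norm := module) L
  have D6 : A.bk y3 y3 = a3 • A.bk x5 x1 := by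
    have L := A.leibniz 1 0 y3 y2 hy2g x1 hx1g
    simp only [ss00, ss01, ss10, ss11, one_smul, neg_smul, neg_neg, neg_zero, map_sub, map_add, map_smul, map_zero, LinearMap.smul_apply, LinearMap.sub_apply, LinearMap.add_apply, LinearMap.zero_apply, ← hx2def, ← hx3def, ← hx4def, ← hx5def, ← hy2def, ← hy3def, hy3x1, smul_zero, sub_self, sub_zero, zero_sub, D3] at L
    linear_combination (norm := module) L
  -- scalar relations
  have RA2 : al * (a2 - a3) = a3 - a2 := by
    have L := A.leibniz 0 1 y2 x1 hx1g y1 hy1g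
    simp only [ss00, ss01, ss10, ss11, one_smul, neg_smul, neg_neg, neg_zero, map_sub, map_add, map_smul, map_zero, LinearMap.smul_apply, LinearMap.sub_apply, LinearMap.add_apply, LinearMap.zero_apply, ← hx2def, ← hx3def, ← hx4def, ← hx5def, ← hy2def, ← hy3def, hy3x1, smul_zero, sub_self, sub_zero, zero_sub, Pal, P21, P31, D2] at L
    exact smul_cancel' hx4ne (by linear_combination (norm := module) L)
  have RA3 : al * a3 = -a3 := by
    have L := A.leibniz 0 1 y3 x1 hx1g y1 hy1g
    simp only [ss00, ss01, ss10, ss11, one_smul, neg_smul, neg_neg, neg_zero, map_sub, map_add, map_smul, map_zero, LinearMap.smul_apply, LinearMap.sub_apply, LinearMap.add_apply, LinearMap.zero_apply, ← hx2def, ← hx3def, ← hx4def, ← hx5def, ← hy2def, ← hy3def, hy3x1, smul_zero, sub_self, sub_zero, zero_sub, Pal, P31, D3] at L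
    exact smul_cancel' hx5ne (by linear_combination (norm := module) L)
  have RB : al * a2 = 0 := by
    have L := A.leibniz 1 1 x1 y1 hy1g y1 hy1g
    simp only [ss00, ss01, ss10, ss11, one_smul, neg_smul, neg_neg, neg_zero, map_sub, map_add, map_smul, map_zero, LinearMap.smul_apply, LinearMap.sub_apply, LinearMap.add_apply, LinearMap.zero_apply, ← hx2def, ← hx3def, ← hx4def, ← hx5def, ← hy2def, ← hy3def, hy3x1, smul_zero, sub_self, sub_zero, zero_sub, P11, Pal, P21, E2] at L
    have h2 := smul_cancel' hx3ne
      (show (al * a2 + al * a2) • x3 = (0 : ℂ) • x3 by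
        linear_combination (norm := module) -L)
    linear_combination h2 / 2
  have RC : al * (a2 - a3) + be * a3 = 0 := by
    have L := A.leibniz 1 1 x1 y1 hy1g y2 hy2g
    simp only [ss00, ss01, ss10, ss11, one_smul, neg_smul, neg_neg, neg_zero, map_sub, map_add, map_smul, map_zero, LinearMap.smul_apply, LinearMap.sub_apply, LinearMap.add_apply, LinearMap.zero_apply, ← hx2def, ← hx3def, ← hx4def, ← hx5def, ← hy2def, ← hy3def, hy3x1, smul_zero, sub_self, sub_zero, zero_sub, D1, Pal, Pbe, D2, P31, E3] at L
    exact smul_cancel' hx4ne (by linear_combination (norm := module) -L)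
  have R6 : be * a3 = 0 := by
    have L := A.leibniz 1 1 x1 y2 hy2g y2 hy2g
    simp only [ss00, ss01, ss10, ss11, one_smul, neg_smul, neg_neg, neg_zero, map_sub, map_add, map_smul, map_zero, LinearMap.smul_apply, LinearMap.sub_apply, LinearMap.add_apply, LinearMap.zero_apply, ← hx2def, ← hx3def, ← hx4def, ← hx5def, ← hy2def, ← hy3def, hy3x1, smul_zero, sub_self, sub_zero, zero_sub, D2, Pbe, D3, E4] at L
    have h2 := smul_cancel' hx5ne
      (show (be * a3 + be * a3) • x5 = (0 : ℂ) • x5 by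
        linear_combination (norm := module) -L)
    linear_combination h2 / 2
  have R3 : a1 - 3 * a2 + 3 * a3 = 0 := by
    have L := A.leibniz 1 0 y1 y3 hy3g x1 hx1g
    simp only [ss00, ss01, ss10, ss11, one_smul, neg_smul, neg_neg, neg_zero, map_sub, map_add, map_smul, map_zero, LinearMap.smul_apply, LinearMap.sub_apply, LinearMap.add_apply, LinearMap.zero_apply, ← hx2def, ← hx3def, ← hx4def, ← hx5def, ← hy2def, ← hy3def, hy3x1, smul_zero, sub_self, sub_zero, zero_sub, D4, D5] at L
    exact smul_cancel' hx5ne (by linear_combination (norm := module) -L)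
  -- solve the scalar system
  have hc23 : a2 = a3 := by linear_combination RA2 - RC + R6
  have ha3 : a3 = 0 := by linear_combination RA3 - RB + RC - R6
  have ha2 : a2 = 0 := hc23.trans ha3
  have ha1 : a1 = 0 := by linear_combination R3 + 3 * ha2 - 3 * ha3
  -- all odd-odd products vanish
  have Z11 : A.bk y1 y1 = 0 := by rw [P11, ha1, zero_smul]
  have Z21 : A.bk y2 y1 = 0 := by rw [P21, ha2, zero_smul]
  have Z31 : A.bk y3 y1 = 0 := by rw [P31, ha3, zero_smul]
  have Z12 : A.bk y1 y2 = 0 := by rw [D1, ha1, ha2]; simp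
  have Z22 : A.bk y2 y2 = 0 := by rw [D2, ha2, ha3]; simp
  have Z32 : A.bk y3 y2 = 0 := by rw [D3, ha3, zero_smul]
  have Z13 : A.bk y1 y3 = 0 := by rw [D4, ha1, ha2, ha3]; simp
  have Z23 : A.bk y2 y3 = 0 := by rw [D5, ha2, ha3]; simp
  have Z33 : A.bk y3 y3 = 0 := by rw [D6, ha3, zero_smul]
  -- contradiction with non-degeneracy
  obtain ⟨u, hu, v, hv, hne⟩ := hnd
  have decomp : ∀ w : V, w ∈ A.g 1 → ∃ c1 c2 c3 : ℂ, w = c1 • y1 + c2 • y2 + c3 • y3 := by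
    intro w hw
    have hw0 : w ∈ A.C 1 0 := hw
    rw [hWC 1 0] at hw0
    obtain ⟨u1, hu1, r1, hr1, he1⟩ := Submodule.mem_sup.mp hw0
    rw [hWC 1 1] at hr1
    obtain ⟨u2, hu2, r2, hr2, he2⟩ := Submodule.mem_sup.mp hr1
    rw [hWC 1 2] at hr2
    obtain ⟨u3, hu3, r3, hr3, he3⟩ := Submodule.mem_sup.mp hr2
    rw [hC1bot] at hr3
    have hr30 : r3 = 0 := (Submodule.mem_bot ℂ).mp hr3
    obtain ⟨c1, hc1⟩ := hy1s u1 hu1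
    obtain ⟨c2, hc2⟩ := hy2s u2 hu2
    obtain ⟨c3, hc3⟩ := hy3s u3 hu3
    refine ⟨c1, c2, c3, ?_⟩
    rw [← he1, ← he2, ← he3, hr30, hc1, hc2, hc3]
    abel
  obtain ⟨c1, c2, c3, hcu⟩ := decomp u hu
  obtain ⟨d1, d2, d3, hcv⟩ := decomp v hv
  apply hne
  rw [hcu, hcv]
  simp only [map_add, map_smul, LinearMap.add_apply, LinearMap.smul_apply,
    Z11, Z21, Z31, Z12, Z22, Z32, Z13, Z23, Z33, smul_zero, add_zero, zero_add]
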